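/- arXiv:1303.2994 — 2 statements merged into one kernel-verified Lean document; each statement's English description precedes it below -/
import Mathlib

section
/- Let χ_1, …, χ_k be characters of the Borel subgroup B and κ a fixed character. Suppose there exist subsets Δ(α) ⊆ {1,…,k} indexed by simple roots α not in S^p such that: ⟨α∨, χ_i⟩ = 1 if i ∈ Δ(α) and of type a or b, ⟨α∨, χ_i⟩ = 2 if i ∈ Δ(α) of type 2a, ⟨α∨, χ_i⟩ = 0 if i ∉ Δ(α); and ⟨α∨, κ⟩ = 2 whenever Δ(α) contains an index of type a or 2a; and every index is in some Δ(α). Then the equation κ = Σᵢ mᵢ χᵢ has at most one solution in positive integers mᵢ, given by mᵢ = ⟨α∨, κ⟩ for i of type b (with i ∈ Δ(α)) and mᵢ = 1 for i of type a or 2a, provided |Δ(α)| = 2 when indices of type a occur and |Δ(α)| = 1 for types 2a and b. -/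
open Finset

/-!
STATEMENT 10: the combinatorial core of the uniqueness of the coefficients m_i in
κ_P = Σ m_i χ_i (Proposition `prop:e` of the paper).

`M` is the character lattice X(T), `S'` indexes the simple roots α ∉ S^p, `coroot α` is
pairing with α∨, each color i ∈ Fin k has a type in {a, 2a, b}, and `Δ α` is the set of
colors moved by P_α.
-/

inductive ColorType where
  | a : ColorType
  | twoa : ColorType
  | b : ColorType

theorem unique_positive_solution_for_kappa
    {M : Type*} [AddCommGroup M] {k : ℕ} {S' : Type*}
    (coroot : S' → (M →+ ℤ))
    (χ : Fin k → M) (κ : M)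
    (ty : Fin k → ColorType)
    (Δ : S' → Finset (Fin k))
    -- pairings of coroots with the weights χ_i:
    (hpair_ab : ∀ (α : S') (i : Fin k), i ∈ Δ α → (ty i = .a ∨ ty i = .b) →
      coroot α (χ i) = 1)
    (hpair_2a : ∀ (α : S') (i : Fin k), i ∈ Δ α → ty i = .twoa →
      coroot α (χ i) = 2)
    (hpair_out : ∀ (α : S') (i : Fin k), i ∉ Δ α → coroot α (χ i) = 0)
    -- ⟨α∨, κ⟩ = 2 whenever Δ(α) contains a color of type a or 2a:
    (hκ : ∀ α : S', (∃ i ∈ Δ α, ty i = .a ∨ ty i = .twoa) → coroot α κ = 2)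
    -- every color is moved by some minimal parabolic:
    (hcover : ∀ i : Fin k, ∃ α : S', i ∈ Δ α)
    -- when a color of type a occurs in Δ(α), Δ(α) has exactly two elements, all of type a:
    (hcard_a : ∀ α : S', (∃ i ∈ Δ α, ty i = .a) →
      (Δ α).card = 2 ∧ ∀ j ∈ Δ α, ty j = .a)
    -- for colors of type 2a or b, Δ(α) is a singleton:
    (hcard_other : ∀ (α : S') (i : Fin k), i ∈ Δ α → (ty i = .twoa ∨ ty i = .b) →
      Δ α = {i}) :
    ∀ m : Fin k → ℤ, (∀ i, 0 < m i) → κ = ∑ i, m i • χ i →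
      ∀ (i : Fin k) (α : S'), i ∈ Δ α →
        (ty i = .b → m i = coroot α κ) ∧
        ((ty i = .a ∨ ty i = .twoa) → m i = 1) := by
  intro m hm hsum i α hiΔ
  have key : ∀ β : S', coroot β κ = ∑ j ∈ Δ β, m j * coroot β (χ j) := by
    intro β
    rw [hsum]
    rw [map_sum]
    rw [← Finset.sum_subset (Finset.subset_univ (Δ β))]
    · apply Finset.sum_congr rfl
      intro j hj
      rw [map_zsmul]
      simp [mul_comm]
    · intro j _ hj
      rw [map_zsmul, hpair_out β j hj]
      simp
  constructor
  · intro hb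
    have hsingle := hcard_other α i hiΔ (Or.inr hb)
    have := key α
    rw [hsingle, Finset.sum_singleton, hpair_ab α i hiΔ (Or.inr hb)] at this
    omega
  · rintro (ha | h2a)
    · obtain ⟨hcard, hall⟩ := hcard_a α ⟨i, hiΔ, ha⟩
      obtain ⟨x, y, hxy, hΔeq⟩ := Finset.card_eq_two.mp hcard
      have hκ2 : coroot α κ = 2 := hκ α ⟨i, hiΔ, Or.inl ha⟩
      have := key α
      rw [hΔeq, Finset.sum_pair hxy] at this
      have hx : x ∈ Δ α := by rw [hΔeq]; simp
      have hy : y ∈ Δ α := by rw [hΔeq]; simp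
      rw [hpair_ab α x hx (Or.inl (hall x hx)), hpair_ab α y hy (Or.inl (hall y hy))] at this
      have hxm := hm x
      have hym := hm y
      have : m x = 1 ∧ m y = 1 := by omega
      have hi : i = x ∨ i = y := by
        have := hiΔ; rw [hΔeq] at this; simpa using this
      rcases hi with rfl | rfl <;> omega
    · have hsingle := hcard_other α i hiΔ (Or.inl h2a)
      have hκ2 : coroot α κ = 2 := hκ α ⟨i, hiΔ, Or.inr h2a⟩
      have := key α
      rw [hsingle, Finset.sum_singleton, hpair_2a α i hiΔ h2a] at this
      omega
end

section
/- In the spherical homogeneous space SL(2)³/diag(SL(2)), with simple roots α, β, γ of the three SL(2) factors, the three colors D₁₂, D₁₃, D₂₃ (cut out by det A_{ij}, where A_{ij} is the 2×2 matrix formed from the first rows of factors i and j) satisfy: the minimal parabolic of α moves exactly D₁₂ and D₁₃; of β moves exactly D₁₂ and D₂₃; of γ moves exactly D₁₃ and D₂₃. -/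
/-!
STATEMENT 16: In G/H = SL(2)³/diag(SL(2)), with simple roots α, β, γ of the three
factors, the colors D₁₂, D₁₃, D₂₃ (cut out by det A_{ij}, where A_{ij} is the 2 × 2
matrix built from the first rows of factors i and j) satisfy: P_α moves exactly D₁₂ and
D₁₃; P_β moves exactly D₁₂ and D₂₃; P_γ moves exactly D₁₃ and D₂₃.

Model: we work with the preimages of the colors in G = SL(2, ℂ)³ (they are right
diag(SL(2))-stable, so this is equivalent).  B ⊆ G is the product of the
lower-triangular Borel subgroups, and the minimal parabolic P_α (for the simple root of
the first factor) is SL(2) × B₂ × B₃, and similarly for β, γ.  "P moves D" means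
P·D ≠ D; since B·D = D and B ⊆ P, this is equivalent to ∃ p ∈ P, ∃ d ∈ D, p·d ∉ D.
-/

abbrev SL2 := Matrix.SpecialLinearGroup (Fin 2) ℂ

abbrev G3 := SL2 × SL2 × SL2

/-- det of the 2 × 2 matrix whose rows are the first rows of u and v -/
def detFirstRows (u v : SL2) : ℂ :=
  u.val 0 0 * v.val 0 1 - u.val 0 1 * v.val 0 0

/-- the (preimages in G of the) three colors -/
def D12 : Set G3 := {g | detFirstRows g.1 g.2.1 = 0}
def D13 : Set G3 := {g | detFirstRows g.1 g.2.2 = 0}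
def D23 : Set G3 := {g | detFirstRows g.2.1 g.2.2 = 0}

/-- lower triangular (Borel) condition in SL(2, ℂ) -/
def IsLow (u : SL2) : Prop := u.val 0 1 = 0

/-- the minimal parabolic subgroups P_α, P_β, P_γ of SL(2)³ -/
def Pa : Set G3 := {p | IsLow p.2.1 ∧ IsLow p.2.2}
def Pb : Set G3 := {p | IsLow p.1 ∧ IsLow p.2.2}
def Pc : Set G3 := {p | IsLow p.1 ∧ IsLow p.2.1}

/-- `P` moves `D`:  P·D ≠ D (equivalently P·D ⊄ D, as B·D = D and B ⊆ P) -/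
def Moves (P D : Set G3) : Prop := ∃ p ∈ P, ∃ d ∈ D, p * d ∉ D

/-- rotation by 90°, an element of SL(2, ℂ) with nonzero upper-right entry -/
def S : SL2 := ⟨!![0, 1; -1, 0], by simp [Matrix.det_fin_two_of]⟩

lemma one_low : IsLow (1 : SL2) := by
  simp [IsLow, Matrix.SpecialLinearGroup.coe_one, Matrix.one_apply]

lemma first_row_mul (u x : SL2) (hu : IsLow u) (j : Fin 2) :
    (u * x).val 0 j = u.val 0 0 * x.val 0 j := by
  rw [Matrix.SpecialLinearGroup.coe_mul, Matrix.mul_apply, Fin.sum_univ_two, hu]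
  ring

lemma det_mul_low (u v x y : SL2) (hu : IsLow u) (hv : IsLow v)
    (h : detFirstRows x y = 0) : detFirstRows (u * x) (v * y) = 0 := by
  unfold detFirstRows at *
  rw [first_row_mul u x hu, first_row_mul u x hu, first_row_mul v y hv,
    first_row_mul v y hv]
  have : u.val 0 0 * v.val 0 0 * (x.val 0 0 * y.val 0 1 - x.val 0 1 * y.val 0 0) = 0 := by
    rw [h]; ring
  linear_combination this

lemma one_mem12 : ((1, 1, 1) : G3) ∈ D12 := by
  simp [D12, detFirstRows, Matrix.SpecialLinearGroup.coe_one, Matrix.one_apply]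

lemma one_mem13 : ((1, 1, 1) : G3) ∈ D13 := one_mem12

lemma one_mem23 : ((1, 1, 1) : G3) ∈ D23 := one_mem12

lemma S01 : S.val 0 1 = 1 := by simp [S]

lemma S00 : S.val 0 0 = 0 := by simp [S]

lemma detS1 : detFirstRows S 1 = -1 := by
  simp [detFirstRows, S01, S00, Matrix.SpecialLinearGroup.coe_one, Matrix.one_apply]

lemma det1S : detFirstRows 1 S = 1 := by
  simp [detFirstRows, S01, S00, Matrix.SpecialLinearGroup.coe_one, Matrix.one_apply]

theorem colors_moved_by_minimal_parabolics :
    (Moves Pa D12 ∧ Moves Pa D13 ∧ ∀ p ∈ Pa, ∀ d ∈ D23, p * d ∈ D23) ∧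
    (Moves Pb D12 ∧ Moves Pb D23 ∧ ∀ p ∈ Pb, ∀ d ∈ D13, p * d ∈ D13) ∧
    (Moves Pc D13 ∧ Moves Pc D23 ∧ ∀ p ∈ Pc, ∀ d ∈ D12, p * d ∈ D12) := by
  refine ⟨⟨⟨(S, 1, 1), ⟨one_low, one_low⟩, (1, 1, 1), one_mem12, ?_⟩,
      ⟨(S, 1, 1), ⟨one_low, one_low⟩, (1, 1, 1), one_mem13, ?_⟩, ?_⟩,
    ⟨⟨(1, S, 1), ⟨one_low, one_low⟩, (1, 1, 1), one_mem12, ?_⟩,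
      ⟨(1, S, 1), ⟨one_low, one_low⟩, (1, 1, 1), one_mem23, ?_⟩, ?_⟩,
    ⟨⟨(1, 1, S), ⟨one_low, one_low⟩, (1, 1, 1), one_mem13, ?_⟩,
      ⟨(1, 1, S), ⟨one_low, one_low⟩, (1, 1, 1), one_mem23, ?_⟩, ?_⟩⟩
  · simp [D12, Prod.mul_def, detS1]
  · simp [D13, Prod.mul_def, detS1]
  · rintro ⟨p1, p2, p3⟩ ⟨h2, h3⟩ ⟨d1, d2, d3⟩ hd
    exact det_mul_low p2 p3 d2 d3 h2 h3 hd
  · simp [D12, Prod.mul_def, det1S]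
  · simp [D23, Prod.mul_def, detS1]
  · rintro ⟨p1, p2, p3⟩ ⟨h1, h3⟩ ⟨d1, d2, d3⟩ hd
    exact det_mul_low p1 p3 d1 d3 h1 h3 hd
  · simp [D13, Prod.mul_def, det1S]
  · simp [D23, Prod.mul_def, det1S]
  · rintro ⟨p1, p2, p3⟩ ⟨h1, h2⟩ ⟨d1, d2, d3⟩ hd
    exact det_mul_low p1 p2 d1 d2 h1 h2 hd
end
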